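/- For every integer a, the discriminant of the polynomial f_a(X) = X^3 - a·X^2 - (a+3)·X - 1 equals (a^2 + 3a + 9)^2; in particular the discriminant is a nonzero perfect square. -/

import Mathlib

/-!
Over an algebraically closed field a cubic with roots `x, y, z` and leading coefficient `c`
satisfies `disc = (c² (x - y)(x - z)(y - z))²`, where `disc` is the usual polynomial expression in
the coefficients (`Cubic.discr`). For `f_a` that expression is `(a² + 3a + 9)²`, and
`4 (a² + 3a + 9) = (2a + 3)² + 27 > 0`.
-/

open Polynomial

namespace Cubic

theorem map_id {R : Type*} [Semiring R] (P : Cubic R) : map (RingHom.id R) P = P := rfl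

theorem roots_eq_of_toPoly_eq {R : Type*} [CommRing R] [IsDomain R] {P : Cubic R} {x y z : R}
    (ha : P.a ≠ 0)
    (h : P.toPoly = C P.a * (X - C x) * (X - C y) * (X - C z)) : P.roots = {x, y, z} := by
  rw [roots, h, mul_assoc, mul_assoc, roots_C_mul _ ha, ← mul_assoc]
  rw [roots_mul (by simp [X_sub_C_ne_zero]), roots_mul (by simp [X_sub_C_ne_zero])]
  simp

variable {K : Type*} [Field K] {P : Cubic K} {x y z : K}

theorem discr_eq_of_forall_eval_eq [Infinite K] (ha : P.a ≠ 0)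
    (h : ∀ w, P.toPoly.eval w = P.a * ((w - x) * (w - y) * (w - z))) :
    P.discr = (P.a * P.a * (x - y) * (x - z) * (y - z)) ^ 2 := by
  refine discr_eq_prod_three_roots (φ := RingHom.id K) ha ?_
  rw [map_id]
  exact roots_eq_of_toPoly_eq ha <| Polynomial.funext fun w => by simp [h, mul_assoc]

theorem exists_forall_eval_eq [IsAlgClosed K] (ha : P.a ≠ 0) :
    ∃ x y z, ∀ w, P.toPoly.eval w = P.a * ((w - x) * (w - y) * (w - z)) := by
  obtain ⟨x, y, z, h3⟩ :=
    (splits_iff_roots_eq_three (φ := RingHom.id K) ha).mp (IsAlgClosed.splits _)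
  have hP := eq_prod_three_roots ha h3
  rw [map_id] at hP
  exact ⟨x, y, z, fun w => by simp [hP, mul_assoc]⟩

end Cubic

def simplestCubic {R : Type*} [Ring R] (a : R) : Cubic R := ⟨1, -a, -(a + 3), -1⟩

theorem simplestCubic_eval {R : Type*} [CommRing R] (a w : R) :
    (simplestCubic a).toPoly.eval w = w ^ 3 - a * w ^ 2 - (a + 3) * w - 1 := by
  simp only [Cubic.toPoly, simplestCubic, eval_add, eval_mul, eval_pow, eval_C, eval_X]
  ring

theorem simplestCubic_discr {R : Type*} [CommRing R] (a : R) :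
    (simplestCubic a).discr = (a ^ 2 + 3 * a + 9) ^ 2 := by
  simp only [Cubic.discr, simplestCubic]; ring

theorem sq_add_three_mul_add_nine_pos {R : Type*} [CommRing R] [LinearOrder R]
    [IsStrictOrderedRing R] (a : R) : 0 < a ^ 2 + 3 * a + 9 := by
  nlinarith [sq_nonneg (2 * a + 3)]

/-- For every integer `a`, the discriminant of `f_a(X) = X^3 - a*X^2 - (a+3)*X - 1`,
computed as `((r₁-r₂)(r₁-r₃)(r₂-r₃))^2` for the complex roots `r₁, r₂, r₃`, equals
`(a^2 + 3a + 9)^2`; in particular it is a nonzero perfect square. -/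
theorem simplest_cubic_discriminant (a : ℤ) :
    (∃ r₁ r₂ r₃ : ℂ, ∀ z : ℂ,
        z ^ 3 - (a : ℂ) * z ^ 2 - ((a : ℂ) + 3) * z - 1 = (z - r₁) * (z - r₂) * (z - r₃)) ∧
    (∀ r₁ r₂ r₃ : ℂ,
        (∀ z : ℂ, z ^ 3 - (a : ℂ) * z ^ 2 - ((a : ℂ) + 3) * z - 1
          = (z - r₁) * (z - r₂) * (z - r₃)) →
        ((r₁ - r₂) * (r₁ - r₃) * (r₂ - r₃)) ^ 2 = ((a : ℂ) ^ 2 + 3 * (a : ℂ) + 9) ^ 2) ∧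
    ((a ^ 2 + 3 * a + 9) ^ 2 ≠ 0 ∧ IsSquare ((a ^ 2 + 3 * a + 9) ^ 2)) := by
  set P := simplestCubic (a : ℂ)
  have hP : ∀ w, P.toPoly.eval w = w ^ 3 - a * w ^ 2 - (a + 3) * w - 1 := simplestCubic_eval _
  have hPa : P.a = 1 := rfl
  have ha : P.a ≠ 0 := hPa ▸ one_ne_zero
  refine ⟨?_, fun r₁ r₂ r₃ h => ?_, (pow_pos (sq_add_three_mul_add_nine_pos a) 2).ne',
    IsSquare.sq _⟩
  · obtain ⟨x, y, z, h⟩ := Cubic.exists_forall_eval_eq ha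
    exact ⟨x, y, z, fun w => by rw [← hP, h, hPa, one_mul]⟩
  · have := Cubic.discr_eq_of_forall_eval_eq ha fun w => by rw [hP, hPa, one_mul, h]
    rw [simplestCubic_discr, hPa, one_mul, one_mul] at this
    exact this.symm
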